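/- Let N ≥ 1, let x, η ∈ ℝ^N with ‖η‖ ≤ ‖x‖, let α ∈ ℝ^N with ‖α‖² = 2, let σ_α(y) = y − ⟨y,α⟩α be the reflection determined by α, and for t ∈ [0,1] let h_{α,t}(y) = y − t⟨y,α⟩α. Let ℓ ≥ 1 be real and let y ∈ ℝ^N be such that A(x,y,η) > 0, A(x,σ_α(y),η) > 0 and A(x,h_{α,t}(y),η) > 0. Then the partial derivatives of the function w ↦ A(x,w,η)^ℓ, evaluated at the point w = h_{α,t}(y), satisfy for each r = 1,…,N: |∂/∂w_r [A(x,·,η)^ℓ](h_{α,t}(y))| ≤ ℓ ( A(x,y,η)^{ℓ−1} + A(x,σ_α(y),η)^{ℓ−1} ). -/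

import Mathlib

/-! The gradient of `A^ℓ` at `w` is `ℓ A(w)^(ℓ-2) (w - η)`, and `‖w - η‖ ≤ A(w)` because
`‖η‖ ≤ ‖x‖`, so every partial derivative is at most `ℓ A(w)^(ℓ-1)` in absolute value. The point
`h_{α,t}(y)` lies on the segment from `y` to `σ_α(y)`, where the convex function `‖· - η‖` is
bounded by its values at the endpoints; as `A` is increasing in `‖w - η‖` and `ℓ - 1 ≥ 0`, this
bounds `A(h_{α,t}(y))^(ℓ-1)` by `A(y)^(ℓ-1)` or by `A(σ_α(y))^(ℓ-1)`. -/

open Set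

/-- `A(x,y,η) = √(‖x‖² + ‖y‖² − 2⟨y,η⟩)`, viewed as a function of `y`. -/
noncomputable def Afun (N : ℕ) (x η y : EuclideanSpace ℝ (Fin N)) : ℝ :=
  Real.sqrt (‖x‖ ^ 2 + ‖y‖ ^ 2 - 2 * (inner ℝ y η : ℝ))

lemma norm_fderiv_sqrt_norm_sub_sq_add_rpow_le {E : Type*} [NormedAddCommGroup E]
    [InnerProductSpace ℝ E] {η p : E} {c : ℝ} (hc : 0 ≤ c) (ℓ : ℝ)
    (hp : 0 < √(‖p - η‖ ^ 2 + c)) :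
    ‖fderiv ℝ (fun w => √(‖w - η‖ ^ 2 + c) ^ ℓ) p‖ ≤ |ℓ| * √(‖p - η‖ ^ 2 + c) ^ (ℓ - 1) := by
  have hderiv := (((hasFDerivAt_sub_const (x := p) η).norm_sq.add_const c).sqrt
    (Real.sqrt_pos.mp hp).ne').rpow_const (p := ℓ) (Or.inl hp.ne')
  set A := √(‖p - η‖ ^ 2 + c)
  have hdist : ‖p - η‖ ≤ A := Real.le_sqrt_of_sq_le (by linarith)
  have hratio : (1 / (2 * A)) * (2 * ‖p - η‖) ≤ 1 := by
    rw [div_mul_eq_mul_div, div_le_one (by positivity)]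
    linarith
  rw [hderiv.fderiv, ContinuousLinearMap.comp_id, two_nsmul, ← two_smul ℝ, norm_smul, norm_smul,
    norm_smul, innerSL_apply_norm, norm_mul, Real.norm_eq_abs ℓ,
    Real.norm_of_nonneg (Real.rpow_nonneg hp.le _), Real.norm_of_nonneg (by positivity),
    Real.norm_two]
  calc |ℓ| * A ^ (ℓ - 1) * (1 / (2 * A) * (2 * ‖p - η‖))
      ≤ |ℓ| * A ^ (ℓ - 1) * 1 := by gcongr
    _ = |ℓ| * A ^ (ℓ - 1) := mul_one _

lemma sub_smul_mem_segment {E : Type*} [AddCommGroup E] [Module ℝ E] (y α : E) (c : ℝ)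
    {t : ℝ} (ht : t ∈ Icc (0 : ℝ) 1) : y - (t * c) • α ∈ segment ℝ y (y - c • α) :=
  ⟨1 - t, t, by linarith [ht.2], ht.1, by ring, by module⟩

lemma Afun_eq_sqrt_norm_sub_sq_add (N : ℕ) (x η w : EuclideanSpace ℝ (Fin N)) :
    Afun N x η w = √(‖w - η‖ ^ 2 + (‖x‖ ^ 2 - ‖η‖ ^ 2)) := by
  rw [Afun, norm_sub_sq_real]
  ring_nf

lemma Afun_le_max_of_mem_segment {N : ℕ} {x η u v w : EuclideanSpace ℝ (Fin N)}
    (hw : w ∈ segment ℝ u v) : Afun N x η w ≤ max (Afun N x η u) (Afun N x η v) := by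
  have hmono {a b} (hab : ‖a - η‖ ≤ ‖b - η‖) : Afun N x η a ≤ Afun N x η b := by
    simp only [Afun_eq_sqrt_norm_sub_sq_add]
    gcongr
  have hdist := (convexOn_univ_dist η).le_on_segment (mem_univ u) (mem_univ v) hw
  simp only [dist_eq_norm, le_max_iff] at hdist ⊢
  exact hdist.imp hmono hmono

lemma norm_fderiv_Afun_rpow_le {N : ℕ} {x η : EuclideanSpace ℝ (Fin N)} (hη : ‖η‖ ≤ ‖x‖)
    (ℓ : ℝ) {p : EuclideanSpace ℝ (Fin N)} (hp : 0 < Afun N x η p) :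
    ‖fderiv ℝ (fun w => Afun N x η w ^ ℓ) p‖ ≤ |ℓ| * Afun N x η p ^ (ℓ - 1) := by
  simp only [Afun_eq_sqrt_norm_sub_sq_add] at hp ⊢
  exact norm_fderiv_sqrt_norm_sub_sq_add_rpow_le (sub_nonneg.mpr (by gcongr)) ℓ hp

theorem deriv_A_rpow_at_segment_point_general
    (N : ℕ)
    (x η : EuclideanSpace ℝ (Fin N)) (hη : ‖η‖ ≤ ‖x‖)
    (α : EuclideanSpace ℝ (Fin N))
    (ℓ : ℝ) (hℓ : 1 ≤ ℓ)
    (t : ℝ) (ht : t ∈ Set.Icc (0 : ℝ) 1)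
    (y : EuclideanSpace ℝ (Fin N))
    (hAh : 0 < Afun N x η (y - (t * (inner ℝ y α : ℝ)) • α)) :
    ∀ r : Fin N,
      |fderiv ℝ (fun w => Afun N x η w ^ ℓ) (y - (t * (inner ℝ y α : ℝ)) • α)
          (EuclideanSpace.single r 1)| ≤
        ℓ * (Afun N x η y ^ (ℓ - 1) +
          Afun N x η (y - (inner ℝ y α : ℝ) • α) ^ (ℓ - 1)) := by
  intro r
  set h := y - (t * (inner ℝ y α : ℝ)) • α
  set σ := y - (inner ℝ y α : ℝ) • α
  have hnorm : ‖fderiv ℝ (fun w => Afun N x η w ^ ℓ) h‖ ≤ ℓ * Afun N x η h ^ (ℓ - 1) := by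
    simpa only [abs_of_nonneg (by linarith : 0 ≤ ℓ)] using norm_fderiv_Afun_rpow_le hη ℓ hAh
  have hpow : Afun N x η h ^ (ℓ - 1) ≤ Afun N x η y ^ (ℓ - 1) + Afun N x η σ ^ (ℓ - 1) := by
    have hnonneg (w) : 0 ≤ Afun N x η w ^ (ℓ - 1) := Real.rpow_nonneg (Real.sqrt_nonneg _) _
    have hmono {a : ℝ} (hle : Afun N x η h ≤ a) : Afun N x η h ^ (ℓ - 1) ≤ a ^ (ℓ - 1) :=
      Real.rpow_le_rpow hAh.le hle (by linarith)
    rcases le_max_iff.mp (Afun_le_max_of_mem_segment (sub_smul_mem_segment y α _ ht)) with hy | hσ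
    · exact (hmono hy).trans (le_add_of_nonneg_right (hnonneg σ))
    · exact (hmono hσ).trans (le_add_of_nonneg_left (hnonneg y))
  calc |fderiv ℝ (fun w => Afun N x η w ^ ℓ) h (EuclideanSpace.single r 1)|
      ≤ ‖fderiv ℝ (fun w => Afun N x η w ^ ℓ) h‖ * ‖EuclideanSpace.single r (1 : ℝ)‖ :=
        (Real.norm_eq_abs _).ge.trans (ContinuousLinearMap.le_opNorm _ _)
    _ ≤ ℓ * Afun N x η h ^ (ℓ - 1) := by rwa [PiLp.norm_single, norm_one, mul_one]
    _ ≤ _ := by gcongr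

/-- with `σ_α(y) = y − ⟨y,α⟩α` and `h_{α,t}(y) = y − t⟨y,α⟩α`, `‖α‖² = 2`,
`ℓ ≥ 1`, the partial derivatives of `w ↦ A(x,w,η)^ℓ` at `w = h_{α,t}(y)` satisfy
`|∂/∂w_r A^ℓ (h_{α,t}(y))| ≤ ℓ (A(x,y,η)^{ℓ−1} + A(x,σ_α(y),η)^{ℓ−1})`. -/
theorem deriv_A_rpow_at_segment_point
    (N : ℕ) (hN : 1 ≤ N)
    (x η : EuclideanSpace ℝ (Fin N)) (hη : ‖η‖ ≤ ‖x‖)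
    (α : EuclideanSpace ℝ (Fin N)) (hα : (inner ℝ α α : ℝ) = 2)
    (ℓ : ℝ) (hℓ : 1 ≤ ℓ)
    (t : ℝ) (ht : t ∈ Set.Icc (0 : ℝ) 1)
    (y : EuclideanSpace ℝ (Fin N))
    (hAy : 0 < Afun N x η y)
    (hAσ : 0 < Afun N x η (y - (inner ℝ y α : ℝ) • α))
    (hAh : 0 < Afun N x η (y - (t * (inner ℝ y α : ℝ)) • α)) :
    ∀ r : Fin N,
      |fderiv ℝ (fun w => Afun N x η w ^ ℓ) (y - (t * (inner ℝ y α : ℝ)) • α)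
          (EuclideanSpace.single r 1)| ≤
        ℓ * (Afun N x η y ^ (ℓ - 1) +
          Afun N x η (y - (inner ℝ y α : ℝ) • α) ^ (ℓ - 1)) :=
  deriv_A_rpow_at_segment_point_general N x η hη α ℓ hℓ t ht y hAh
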